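/- Let (A,b) ∈ M_n(ℝ) × ℝⁿ be a controllable pair. Then lim_{T→+∞} ρ(A,T) exists and equals sup_{T>0} ρ(A,T), and lim_{T→0⁺} ρ(A,T) exists and equals inf_{T>0} ρ(A,T). -/

import Mathlib

/-!
Up to a null set the only `(T,T)`-signal is `α ≡ 1` on `[0,∞)`, so the closed loop is the
autonomous system `ẋ = (A - b Kᵀ) x`. By Ackermann's formula `K` can be chosen to make
`A - b Kᵀ + m • 1` nilpotent for any `m`, hence `RC(A,T,T) = +∞` and `0 ≤ ρ(A,T) ≤ 1`.
If `0 < T' < T` and `k = ⌊T/T'⌋`, every `(T',μ)`-signal is a `(T,kμ)`-signal, and comparing the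
critical ratios gives `(T - T') ρ(A,T') ≤ T ρ(A,T)`. Letting `T → ∞` with `T'` fixed, resp.
`T' → 0⁺` with `T` fixed, this one inequality yields both limits.
-/

open MeasureTheory Filter Matrix

noncomputable section

/-- A `(T,μ)`-signal: a measurable function with values in `[0,1]` whose integral over any
window `[t, t+T]` with `t ≥ 0` is at least `μ`. -/
def IsPESignal (T μ : ℝ) (α : ℝ → ℝ) : Prop :=
  Measurable α ∧ (∀ t, α t ∈ Set.Icc (0:ℝ) 1) ∧
    ∀ t : ℝ, 0 ≤ t → μ ≤ ∫ s in t..(t + T), α s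

/-- `x` is the solution of `ẋ = (A - α(t) b Kᵀ) x`, `x(t₀) = x₀`, in integral (Carathéodory)
form. -/
def IsLinSol {n : ℕ} (A : Matrix (Fin n) (Fin n) ℝ) (b K : Fin n → ℝ)
    (α : ℝ → ℝ) (t₀ : ℝ) (x₀ : Fin n → ℝ) (x : ℝ → Fin n → ℝ) : Prop :=
  x t₀ = x₀ ∧ ∀ t : ℝ, t₀ ≤ t →
    x t = x₀ + ∫ s in t₀..t, (A - α s • vecMulVec b K).mulVec (x s)

/-- `K` is a `(T,μ)`-stabilizer for the pair `(A,b)`. -/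
def IsStabilizer {n : ℕ} (T μ : ℝ) (A : Matrix (Fin n) (Fin n) ℝ) (b K : Fin n → ℝ) : Prop :=
  ∃ C > (0:ℝ), ∃ γ > (0:ℝ), ∀ α : ℝ → ℝ, IsPESignal T μ α →
    ∀ t₀ : ℝ, 0 ≤ t₀ → ∀ x₀ : Fin n → ℝ, ∀ x : ℝ → Fin n → ℝ,
      IsLinSol A b K α t₀ x₀ x →
      ∀ t : ℝ, t₀ ≤ t → ‖x t‖ ≤ C * Real.exp (-γ * (t - t₀)) * ‖x₀‖

/-- Maximal Lyapunov exponent `λ⁺(α, K)`. -/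
def lamPlus {n : ℕ} (A : Matrix (Fin n) (Fin n) ℝ) (b K : Fin n → ℝ) (α : ℝ → ℝ) : EReal :=
  ⨆ (x₀ : Fin n → ℝ) (_ : ‖x₀‖ = 1) (x : ℝ → Fin n → ℝ) (_ : IsLinSol A b K α 0 x₀ x),
    Filter.limsup (fun t : ℝ => ((Real.log ‖x t‖ / t : ℝ) : EReal)) Filter.atTop

/-- Rate of convergence `rc(A, b, T, μ, K)`. -/
def rateC {n : ℕ} (A : Matrix (Fin n) (Fin n) ℝ) (b : Fin n → ℝ) (T μ : ℝ)
    (K : Fin n → ℝ) : EReal :=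
  - ⨆ (α : ℝ → ℝ) (_ : IsPESignal T μ α), lamPlus A b K α

/-- Maximal rate of convergence `RC(A, T, μ)` (with respect to the pair `(A, b)`). -/
def RCmax {n : ℕ} (A : Matrix (Fin n) (Fin n) ℝ) (b : Fin n → ℝ) (T μ : ℝ) : EReal :=
  ⨆ K : Fin n → ℝ, rateC A b T μ K

/-- The pair `(A,b)` is controllable: the Kalman matrix `(b | Ab | ... | A^{n-1}b)` has
rank `n`. -/
def IsControllable {n : ℕ} (A : Matrix (Fin n) (Fin n) ℝ) (b : Fin n → ℝ) : Prop :=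
  (Matrix.of fun i j : Fin n => (A ^ (j : ℕ)).mulVec b i).rank = n

/-- `ρ(A,T) = inf { ρ ∈ (0,1] : RC(A, T, Tρ) = +∞ }`. -/
def rhoCrit {n : ℕ} (A : Matrix (Fin n) (Fin n) ℝ) (b : Fin n → ℝ) (T : ℝ) : ℝ :=
  sInf {ρ : ℝ | ρ ∈ Set.Ioc (0:ℝ) 1 ∧ RCmax A b T (T * ρ) = ⊤}

open Topology

lemma ae_eq_one_of_le_one_of_le_integral {f : ℝ → ℝ} {a c : ℝ} (hac : a ≤ c)
    (hf : IntervalIntegrable f volume a c) (hle : ∀ s, f s ≤ 1)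
    (hint : c - a ≤ ∫ s in a..c, f s) : ∀ᵐ s, s ∈ Set.Icc a c → f s = 1 := by
  have hnonneg : ∀ s, 0 ≤ 1 - f s := fun s => sub_nonneg.2 (hle s)
  have hzero : ∫ s in Set.Icc a c, (1 - f s) = 0 := by
    refine le_antisymm ?_ (setIntegral_nonneg measurableSet_Icc fun s _ => hnonneg s)
    rw [integral_Icc_eq_integral_Ioc, ← intervalIntegral.integral_of_le hac,
      intervalIntegral.integral_sub intervalIntegrable_const hf]
    simp only [intervalIntegral.integral_const, smul_eq_mul, mul_one]
    linarith
  have hint_Icc : IntegrableOn (fun s => 1 - f s) (Set.Icc a c) :=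
    (intervalIntegrable_iff_integrableOn_Icc_of_le hac).1 (intervalIntegrable_const.sub hf)
  have h := (setIntegral_eq_zero_iff_of_nonneg_ae (ae_of_all _ hnonneg) hint_Icc).1 hzero
  rw [EventuallyEq, ae_restrict_iff' measurableSet_Icc] at h
  filter_upwards [h] with s hs hmem
  linarith [show 1 - f s = 0 from hs hmem]

namespace IsPESignal

variable {T μ : ℝ} {α : ℝ → ℝ}

lemma intervalIntegrable (hα : IsPESignal T μ α) (a c : ℝ) :
    IntervalIntegrable α volume a c := by
  refine (intervalIntegrable_const (c := (1 : ℝ))).mono_fun hα.1.aestronglyMeasurable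
    (ae_of_all _ fun s => ?_)
  simpa [abs_of_nonneg (hα.2.1 s).1] using (hα.2.1 s).2

lemma mono_window (hα : IsPESignal T μ α) {T' : ℝ} (h : T ≤ T') : IsPESignal T' μ α := by
  refine ⟨hα.1, hα.2.1, fun t ht => (hα.2.2 t ht).trans ?_⟩
  rw [← intervalIntegral.integral_add_adjacent_intervals (hα.intervalIntegrable t (t + T))
    (hα.intervalIntegrable (t + T) (t + T'))]
  have : 0 ≤ ∫ s in (t + T)..(t + T'), α s :=
    intervalIntegral.integral_nonneg (by linarith) fun s _ => (hα.2.1 s).1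
  linarith

lemma nat_mul (hα : IsPESignal T μ α) (hT : 0 ≤ T) (k : ℕ) :
    IsPESignal (k * T) (k * μ) α := by
  refine ⟨hα.1, hα.2.1, fun t ht => ?_⟩
  induction k with
  | zero => simp
  | succ k ih =>
    have hlast := hα.2.2 (t + k * T) (by positivity)
    rw [← intervalIntegral.integral_add_adjacent_intervals (hα.intervalIntegrable t (t + k * T))
      (hα.intervalIntegrable (t + k * T) (t + (k + 1 : ℕ) * T))]
    push_cast at ih ⊢
    rw [show t + (k + 1) * T = t + k * T + T by ring]
    linarith

lemma ae_eq_one (hα : IsPESignal T T α) (hT : 0 < T) : ∀ᵐ s, 0 ≤ s → α s = 1 := by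
  have hwindow : ∀ j : ℕ, ∀ᵐ s, s ∈ Set.Icc (j * T) (j * T + T) → α s = 1 := fun j =>
    ae_eq_one_of_le_one_of_le_integral (by linarith) (hα.intervalIntegrable _ _)
      (fun s => (hα.2.1 s).2) (by simpa using hα.2.2 (j * T) (by positivity))
  filter_upwards [ae_all_iff.2 hwindow] with s hs hs0
  have hq : 0 ≤ s / T := div_nonneg hs0 hT.le
  refine hs ⌊s / T⌋₊ ⟨(le_div_iff₀ hT).1 (Nat.floor_le hq), ?_⟩
  have := (div_lt_iff₀ hT).1 (Nat.lt_floor_add_one (s / T))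
  linarith

end IsPESignal

section SignalMonotonicity

variable {n : ℕ} (A : Matrix (Fin n) (Fin n) ℝ) (b : Fin n → ℝ)

lemma RCmax_le_RCmax_of_imp {T μ T' μ' : ℝ}
    (h : ∀ α, IsPESignal T' μ' α → IsPESignal T μ α) : RCmax A b T μ ≤ RCmax A b T' μ' :=
  iSup_mono fun _ => EReal.neg_le_neg_iff.2 <| iSup_mono fun α =>
    iSup_le fun hα => le_iSup_of_le (h α hα) le_rfl

lemma RCmax_le_of_nat_mul_le {T T' μ : ℝ} (hT : 0 ≤ T) {k : ℕ} (hk : k * T ≤ T') :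
    RCmax A b T' (k * μ) ≤ RCmax A b T μ :=
  RCmax_le_RCmax_of_imp A b fun _ hα => (hα.nat_mul hT k).mono_window hk

end SignalMonotonicity

namespace Matrix

variable {n : ℕ}

lemma isUnit_det_of_antitriangular {R : Type*} [CommRing R] (Q : Matrix (Fin n) (Fin n) R)
    (hzero : ∀ i k : Fin n, (i : ℕ) + k + 1 < n → Q i k = 0)
    (hone : ∀ i k : Fin n, (i : ℕ) + k + 1 = n → Q i k = 1) : IsUnit Q.det := by
  have hrev : ∀ k : Fin n, ((Fin.revPerm k : Fin n) : ℕ) = n - 1 - k := fun k => by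
    simp only [Fin.revPerm_apply, Fin.val_rev]; omega
  have htri : (Q.submatrix id Fin.revPerm).IsLowerTriangular := fun i k (hik : i < k) =>
    hzero i _ (by rw [hrev]; omega)
  have hdet : (Q.submatrix id Fin.revPerm).det = 1 := by
    rw [det_of_isLowerTriangular _ htri]
    exact Finset.prod_eq_one fun i _ => hone i _ (by rw [hrev]; omega)
  rw [det_permute'] at hdet
  exact IsUnit.of_mul_eq_one_right _ hdet

end Matrix

section PolePlacement

open Polynomial

variable {n : ℕ} {A : Matrix (Fin n) (Fin n) ℝ} {b η : Fin n → ℝ}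

lemma IsControllable.exists_dotProduct_pow_mulVec_eq (hctrl : IsControllable A b) :
    ∃ η : Fin n → ℝ, ∀ s < n, η ⬝ᵥ (A ^ s *ᵥ b) = if s + 1 = n then 1 else 0 := by
  set C := Matrix.of fun i j : Fin n => (A ^ (j : ℕ)).mulVec b i
  have hsurj : Function.Surjective Cᵀ.mulVecLin := by
    rw [← LinearMap.range_eq_top]
    apply Submodule.eq_top_of_finrank_eq
    rw [← Matrix.rank, rank_transpose, hctrl, Module.finrank_fin_fun]
  obtain ⟨η, hη⟩ := hsurj fun s : Fin n => if (s : ℕ) + 1 = n then 1 else 0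
  refine ⟨η, fun s hs => ?_⟩
  rw [← congrFun hη ⟨s, hs⟩]
  simp [vecMul, mulVec, dotProduct, C, mul_comm]

lemma vecMul_pow_sub_vecMulVec_of_lt
    (hη : ∀ s < n, η ⬝ᵥ (A ^ s *ᵥ b) = if s + 1 = n then 1 else 0) (K : Fin n → ℝ) :
    ∀ j < n, η ᵥ* (A - vecMulVec b K) ^ j = η ᵥ* A ^ j
  | 0, _ => by simp
  | j + 1, hj => by
    rw [pow_succ, ← vecMul_vecMul, vecMul_pow_sub_vecMulVec_of_lt hη K j (by omega), vecMul_sub,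
      vecMul_vecMulVec, ← dotProduct_mulVec, hη j (by omega), if_neg (by omega), zero_smul,
      sub_zero, vecMul_vecMul, ← pow_succ]

lemma vecMul_pow_sub_vecMulVec_self
    (hη : ∀ s < n, η ⬝ᵥ (A ^ s *ᵥ b) = if s + 1 = n then 1 else 0) (K : Fin n → ℝ) :
    η ᵥ* (A - vecMulVec b K) ^ n = η ᵥ* A ^ n - K := by
  cases n with
  | zero => exact Subsingleton.elim _ _
  | succ k =>
    rw [pow_succ, ← vecMul_vecMul, vecMul_pow_sub_vecMulVec_of_lt hη K k (by omega), vecMul_sub,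
      vecMul_vecMulVec, ← dotProduct_mulVec, hη k (by omega), if_pos rfl, one_smul,
      vecMul_vecMul, ← pow_succ]

lemma isUnit_det_of_vecMul_pow
    (hη : ∀ s < n, η ⬝ᵥ (A ^ s *ᵥ b) = if s + 1 = n then 1 else 0) :
    IsUnit (Matrix.of fun i : Fin n => η ᵥ* A ^ (i : ℕ)).det := by
  set C := Matrix.of fun i j : Fin n => (A ^ (j : ℕ)).mulVec b i
  have hentry : ∀ i k : Fin n, ((Matrix.of fun i : Fin n => η ᵥ* A ^ (i : ℕ)) * C) i k
      = η ⬝ᵥ (A ^ ((i : ℕ) + k) *ᵥ b) := fun i k => by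
    rw [pow_add, ← mulVec_mulVec, dotProduct_mulVec]
    rfl
  have hZC := Matrix.isUnit_det_of_antitriangular (_ * C)
    (fun i k hik => by rw [hentry, hη _ (by omega), if_neg (by omega)])
    (fun i k hik => by rw [hentry, hη _ (by omega), if_pos hik])
  rw [det_mul] at hZC
  exact isUnit_of_mul_isUnit_left hZC

-- Ackermann's formula: `Kᵀ = ηᵀ p(A)`, with `ηᵀ` the last row of the inverse Kalman matrix.
theorem IsControllable.exists_aeval_eq_zero (hctrl : IsControllable A b) {p : ℝ[X]}
    (hp : p.Monic) (hdeg : p.natDegree = n) :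
    ∃ K : Fin n → ℝ, aeval (A - vecMulVec b K) p = 0 := by
  obtain ⟨η, hη⟩ := hctrl.exists_dotProduct_pow_mulVec_eq
  have hlead : p.coeff n = 1 := hdeg ▸ hp.coeff_natDegree
  have hexpand : ∀ X : Matrix (Fin n) (Fin n) ℝ,
      η ᵥ* aeval X p = ∑ i ∈ Finset.range n, p.coeff i • η ᵥ* X ^ i + η ᵥ* X ^ n := by
    intro X
    rw [aeval_eq_sum_range, hdeg, vecMul_sum, Finset.sum_range_succ, hlead, one_smul]
    simp only [vecMul_smul]
  set K := η ᵥ* aeval A p with hK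
  set A' := A - vecMulVec b K
  have hη_p : η ᵥ* aeval A' p = 0 := by
    rw [hexpand, vecMul_pow_sub_vecMulVec_self hη, hK, hexpand A,
      Finset.sum_congr rfl fun i hi => by
        rw [vecMul_pow_sub_vecMulVec_of_lt hη K i (Finset.mem_range.1 hi)]]
    abel
  have hrow : ∀ i : ℕ, (η ᵥ* A' ^ i) ᵥ* aeval A' p = 0 := fun i => by
    rw [vecMul_vecMul, ← aeval_X_pow (R := ℝ), ← map_mul, mul_comm, map_mul, aeval_X_pow,
      ← vecMul_vecMul, hη_p, zero_vecMul]
  set Z := Matrix.of fun i : Fin n => η ᵥ* A ^ (i : ℕ)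
  have hZp : Z * aeval A' p = 0 := by
    ext i j
    have := congrFun (hrow i) j
    rw [vecMul_pow_sub_vecMulVec_of_lt hη K i i.isLt] at this
    exact this
  exact ⟨K, ((isUnit_iff_isUnit_det Z).2 (isUnit_det_of_vecMul_pow hη)).mul_right_eq_zero.1 hZp⟩

end PolePlacement

section LinearODE

attribute [local instance] Matrix.linftyOpNormedRing Matrix.linftyOpNormedAlgebra

variable {n : ℕ}

lemma hasDerivAt_exp_smul_mulVec (M : Matrix (Fin n) (Fin n) ℝ) (x₀ : Fin n → ℝ) (t : ℝ) :
    HasDerivAt (fun u : ℝ => NormedSpace.exp (u • M) *ᵥ x₀)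
      (M *ᵥ (NormedSpace.exp (t • M) *ᵥ x₀)) t := by
  let L : Matrix (Fin n) (Fin n) ℝ →L[ℝ] (Fin n → ℝ) :=
    (LinearMap.applyₗ x₀ ∘ₗ Matrix.toLin'.toLinearMap).toContinuousLinearMap
  rw [Matrix.mulVec_mulVec]
  exact L.hasFDerivAt.comp_hasDerivAt t (hasDerivAt_exp_smul_const' M t)

variable {M : Matrix (Fin n) (Fin n) ℝ} {x₀ : Fin n → ℝ} {x : ℝ → Fin n → ℝ}

lemma eqOn_exp_smul_mulVec_of_intervalIntegrable {s : ℝ}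
    (hx : ∀ t ∈ Set.Icc 0 s, x t = x₀ + ∫ u in (0:ℝ)..t, M *ᵥ x u)
    (hint : IntervalIntegrable (fun u => M *ᵥ x u) volume 0 s) :
    Set.EqOn x (fun t => NormedSpace.exp (t • M) *ᵥ x₀) (Set.Icc 0 s) := by
  intro t ht
  have hs : 0 ≤ s := ht.1.trans ht.2
  have hx0 : x 0 = x₀ := by simpa using hx 0 ⟨le_rfl, hs⟩
  have hcont : ContinuousOn x (Set.Icc 0 s) := by
    have := intervalIntegral.continuousOn_primitive_interval' hint Set.left_mem_uIcc
    rw [Set.uIcc_of_le hs] at this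
    exact (continuousOn_const.add this).congr hx
  have hgcont : ContinuousOn (fun u => M *ᵥ x u) (Set.Icc 0 s) :=
    M.mulVecLin.toContinuousLinearMap.continuous.comp_continuousOn hcont
  have hderiv : ∀ t ∈ Set.Ico 0 s, HasDerivWithinAt x (M *ᵥ x t) (Set.Ici t) t := by
    intro t ht
    have hGE : Set.Icc 0 s ∈ 𝓝[≥] t :=
      mem_of_superset (Icc_mem_nhdsGE ht.2) (Set.Icc_subset_Icc_left ht.1)
    have hGT : Set.Icc 0 s ∈ 𝓝[>] t := nhdsWithin_mono _ Set.Ioi_subset_Ici_self hGE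
    have hprim := intervalIntegral.integral_hasDerivWithinAt_right (s := Set.Ici t)
      (hint.mono_set (Set.uIcc_subset_uIcc_left (Set.mem_uIcc_of_le ht.1 ht.2.le)))
      ((hgcont.stronglyMeasurableAtFilter_nhdsWithin measurableSet_Icc t).filter_mono
        (nhdsWithin_le_of_mem hGT))
      ((hgcont t (Set.Ico_subset_Icc_self ht)).mono_of_mem_nhdsWithin hGT)
    exact (hprim.const_add x₀).congr_of_eventuallyEq (eventually_of_mem hGE hx)
      (hx t (Set.Ico_subset_Icc_self ht))
  exact ODE_solution_unique (v := fun _ y => M *ᵥ y)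
    (fun _ => M.mulVecLin.toContinuousLinearMap.lipschitz) hcont hderiv
    (continuous_iff_continuousAt.2 fun u =>
      (hasDerivAt_exp_smul_mulVec M x₀ u).continuousAt).continuousOn
    (fun u _ => (hasDerivAt_exp_smul_mulVec M x₀ u).hasDerivWithinAt) (by simp [hx0]) ht

lemma intervalIntegrable_of_forall_eq_integral
    (hx : ∀ t, 0 ≤ t → x t = x₀ + ∫ u in (0:ℝ)..t, M *ᵥ x u) {s : ℝ} (hs : 0 ≤ s) :
    IntervalIntegrable (fun u => M *ᵥ x u) volume 0 s := by
  set g := fun u => M *ᵥ x u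
  set bad := {t : ℝ | 0 ≤ t ∧ ¬ IntervalIntegrable g volume 0 t}
  by_contra hs_bad
  have hne : bad.Nonempty := ⟨s, hs, hs_bad⟩
  set t₀ := sInf bad
  have ht₀ : 0 ≤ t₀ := le_csInf hne fun _ h => h.1
  have hbad_gt : ∀ u, t₀ < u → ¬ IntervalIntegrable g volume 0 u := fun u hu hint => by
    obtain ⟨v, hv, hvu⟩ := exists_lt_of_csInf_lt hne hu
    exact hv.2 (hint.mono_set (Set.uIcc_subset_uIcc_left (Set.mem_uIcc_of_le hv.1 hvu.le)))
  have hgood_lt : ∀ u, 0 ≤ u → u < t₀ → IntervalIntegrable g volume 0 u := fun u hu hlt => by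
    by_contra h
    exact (csInf_le (⟨0, fun _ h => h.1⟩ : BddBelow bad) ⟨hu, h⟩).not_gt hlt
  -- Left of `t₀` the integrand is integrable, so `x` is the exponential solution; right of `t₀`
  -- the integral takes the junk value `0`, so `x` is frozen at `x₀`.
  have hleft : Set.EqOn (fun u => M *ᵥ (NormedSpace.exp (u • M) *ᵥ x₀)) g (Set.Ioo 0 t₀) :=
    fun u hu => congrArg _ (eqOn_exp_smul_mulVec_of_intervalIntegrable (fun t ht => hx t ht.1)
      (hgood_lt u hu.1.le hu.2) (Set.right_mem_Icc.2 hu.1.le)).symm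
  have hright : Set.EqOn (fun _ => M *ᵥ x₀) g (Set.Ioo t₀ (t₀ + 1)) := fun u hu => by
    simp only [g]
    rw [hx u (ht₀.trans hu.1.le), intervalIntegral.integral_undef (hbad_gt u hu.1), add_zero]
  have h₁ : IntervalIntegrable g volume 0 t₀ := by
    rw [intervalIntegrable_iff_integrableOn_Ioo_of_le ht₀]
    exact ((M.mulVecLin.toContinuousLinearMap.continuous.comp (continuous_iff_continuousAt.2
      fun u => (hasDerivAt_exp_smul_mulVec M x₀ u).continuousAt)).integrableOn_Icc.mono_set
      Set.Ioo_subset_Icc_self).congr_fun hleft measurableSet_Ioo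
  have h₂ : IntervalIntegrable g volume t₀ (t₀ + 1) := by
    rw [intervalIntegrable_iff_integrableOn_Ioo_of_le (by linarith)]
    exact (continuous_const.integrableOn_Icc.mono_set Set.Ioo_subset_Icc_self).congr_fun
      hright measurableSet_Ioo
  exact hbad_gt (t₀ + 1) (by linarith) (h₁.trans h₂)

lemma eq_exp_smul_mulVec_of_forall_eq_integral
    (hx : ∀ t, 0 ≤ t → x t = x₀ + ∫ u in (0:ℝ)..t, M *ᵥ x u) {t : ℝ} (ht : 0 ≤ t) :
    x t = NormedSpace.exp (t • M) *ᵥ x₀ :=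
  eqOn_exp_smul_mulVec_of_intervalIntegrable (fun u hu => hx u hu.1)
    (intervalIntegrable_of_forall_eq_integral hx ht) ⟨ht, le_rfl⟩

end LinearODE

lemma limsup_log_div_le {u : ℝ → ℝ} {C a : ℝ}
    (h : ∀ᶠ t in atTop, 0 < u t ∧ u t ≤ C * Real.exp (a * t)) :
    limsup (fun t => ((Real.log (u t) / t : ℝ) : EReal)) atTop ≤ a := by
  have hlim : Tendsto (fun t => ((Real.log C / t + a : ℝ) : EReal)) atTop (𝓝 a) :=
    EReal.tendsto_coe.2 (by
      simpa using ((tendsto_const_nhds (x := Real.log C)).div_atTop tendsto_id).add_const a)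
  refine (limsup_le_limsup ?_).trans hlim.limsup_eq.le
  filter_upwards [h, eventually_gt_atTop 0] with t ⟨hpos, hle⟩ ht
  have hC : 0 < C := pos_of_mul_pos_left (hpos.trans_le hle) (Real.exp_pos _).le
  rw [EReal.coe_le_coe_iff, div_add' _ _ _ ht.ne', div_le_div_iff_of_pos_right ht]
  calc Real.log (u t) ≤ Real.log (C * Real.exp (a * t)) := Real.log_le_log hpos hle
    _ = Real.log C + a * t := by rw [Real.log_mul hC.ne' (Real.exp_pos _).ne', Real.log_exp]

section ClosedLoop

attribute [local instance] Matrix.linftyOpNormedRing Matrix.linftyOpNormedAlgebra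

variable {n : ℕ}

lemma exp_smul_eq_sum_of_pow_eq_zero {N : Matrix (Fin n) (Fin n) ℝ} {k : ℕ} (hN : N ^ k = 0)
    (t : ℝ) :
    NormedSpace.exp (t • N) = ∑ j ∈ Finset.range k, (t ^ j / j.factorial) • N ^ j := by
  rw [congrFun (NormedSpace.exp_eq_tsum ℝ) (t • N), tsum_eq_sum (s := Finset.range k)]
  · refine Finset.sum_congr rfl fun j _ => ?_
    rw [smul_pow, smul_smul, inv_mul_eq_div]
  · intro j hj
    rw [smul_pow, pow_eq_zero_of_le (not_lt.1 (Finset.mem_range.not.1 hj)) hN, smul_zero,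
      smul_zero]

lemma exp_smul_eq_exp_smul_add_smul_one (M : Matrix (Fin n) (Fin n) ℝ) (m t : ℝ) :
    NormedSpace.exp (t • M) = Real.exp (-(m * t)) • NormedSpace.exp (t • (M + m • 1)) := by
  have hsplit : t • M = (-(m * t)) • (1 : Matrix (Fin n) (Fin n) ℝ) + t • (M + m • 1) := by
    module
  rw [hsplit, Matrix.exp_add_of_commute _ _ ((Commute.one_left _).smul_left _),
    smul_one_eq_diagonal, Matrix.exp_diagonal, Pi.exp_def, ← Real.exp_eq_exp_ℝ,
    ← smul_one_eq_diagonal, smul_one_mul]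

lemma norm_exp_smul_le_of_pow_eq_zero {M : Matrix (Fin n) (Fin n) ℝ} {m : ℝ} {k : ℕ}
    (hM : (M + m • 1) ^ k = 0) {t : ℝ} (ht : 0 ≤ t) :
    ‖NormedSpace.exp (t • M)‖ ≤
      (∑ j ∈ Finset.range k, ‖(M + m • 1) ^ j‖) * Real.exp ((1 - m) * t) := by
  rw [exp_smul_eq_exp_smul_add_smul_one M m, exp_smul_eq_sum_of_pow_eq_zero hM, norm_smul,
    Real.norm_eq_abs, Real.abs_exp]
  calc Real.exp (-(m * t)) * ‖∑ j ∈ Finset.range k, (t ^ j / j.factorial) • (M + m • 1) ^ j‖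
      ≤ Real.exp (-(m * t)) * ∑ j ∈ Finset.range k, ‖(M + m • 1) ^ j‖ * Real.exp t := by
        gcongr
        refine (norm_sum_le _ _).trans (Finset.sum_le_sum fun j _ => ?_)
        rw [norm_smul, Real.norm_of_nonneg (by positivity), mul_comm]
        gcongr
        exact Real.pow_div_factorial_le_exp t ht j
    _ = _ := by
        rw [← Finset.sum_mul, mul_left_comm, ← Real.exp_add]
        ring_nf

variable {A : Matrix (Fin n) (Fin n) ℝ} {b K : Fin n → ℝ} {α : ℝ → ℝ}

lemma IsLinSol.eq_exp_smul_mulVec {x₀ : Fin n → ℝ} {x : ℝ → Fin n → ℝ}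
    (hx : IsLinSol A b K α 0 x₀ x) (hα : ∀ᵐ s, 0 ≤ s → α s = 1) {t : ℝ} (ht : 0 ≤ t) :
    x t = NormedSpace.exp (t • (A - vecMulVec b K)) *ᵥ x₀ := by
  refine eq_exp_smul_mulVec_of_forall_eq_integral (fun t ht => ?_) ht
  rw [hx.2 t ht]
  congr 1
  refine intervalIntegral.integral_congr_ae ?_
  filter_upwards [hα] with u hu hmem
  rw [Set.uIoc_of_le ht] at hmem
  rw [hu hmem.1.le, one_smul]

lemma lamPlus_le_of_isPESignal_self {T m : ℝ} (hT : 0 < T) (hα : IsPESignal T T α)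
    (hK : (A - vecMulVec b K + m • 1) ^ n = 0) : lamPlus A b K α ≤ ((1 - m : ℝ) : EReal) := by
  refine iSup₂_le fun x₀ hx₀ => iSup₂_le fun x hx =>
    limsup_log_div_le (C := ∑ j ∈ Finset.range n, ‖(A - vecMulVec b K + m • 1) ^ j‖) ?_
  filter_upwards [eventually_ge_atTop 0] with t ht
  rw [hx.eq_exp_smul_mulVec (hα.ae_eq_one hT) ht]
  have hx₀' : x₀ ≠ 0 := by rintro rfl; simp at hx₀
  refine ⟨norm_pos_iff.2 fun h0 => hx₀' (Matrix.mulVec_injective_of_isUnit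
    (Matrix.isUnit_exp _) (h0.trans (Matrix.mulVec_zero _).symm)), ?_⟩
  calc _ ≤ ‖NormedSpace.exp (t • (A - vecMulVec b K))‖ * ‖x₀‖ := Matrix.linfty_opNorm_mulVec _ _
    _ ≤ _ := by rw [hx₀, mul_one]; exact norm_exp_smul_le_of_pow_eq_zero hK ht

end ClosedLoop

open Polynomial in
theorem RCmax_self_eq_top {n : ℕ} {A : Matrix (Fin n) (Fin n) ℝ} {b : Fin n → ℝ}
    (hctrl : IsControllable A b) {T : ℝ} (hT : 0 < T) : RCmax A b T T = ⊤ := by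
  refine (EReal.eq_top_iff_forall_lt _).2 fun r => ?_
  obtain ⟨K, hK⟩ := hctrl.exists_aeval_eq_zero ((monic_X_add_C (r + 2)).pow n)
    (by rw [natDegree_pow, natDegree_X_add_C, mul_one])
  rw [map_pow, map_add, aeval_X, aeval_C, Algebra.algebraMap_eq_smul_one] at hK
  calc (r : EReal) < ((r + 1 : ℝ) : EReal) := EReal.coe_lt_coe_iff.2 (lt_add_one r)
    _ = -((1 - (r + 2) : ℝ) : EReal) := by rw [← EReal.coe_neg]; congr 1; ring
    _ ≤ rateC A b T T K :=
        EReal.neg_le_neg_iff.2 (iSup₂_le fun α hα => lamPlus_le_of_isPESignal_self hT hα hK)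
    _ ≤ RCmax A b T T := le_iSup (rateC A b T T) K

section WindowRescaling

variable {f : ℝ → ℝ}

lemma tendsto_atTop_sSup_of_sub_mul_le
    (hf : ∀ T' T, 0 < T' → T' < T → (T - T') * f T' ≤ T * f T)
    (hbdd : BddAbove (f '' Set.Ioi 0)) :
    Tendsto f atTop (𝓝 (sSup (f '' Set.Ioi 0))) := by
  refine tendsto_order.2 ⟨fun a ha => ?_, fun c hc => ?_⟩
  · obtain ⟨_, ⟨T', hT', rfl⟩, haT'⟩ :=
      exists_lt_of_lt_csSup (Set.nonempty_Ioi.image f) ha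
    have hlim : Tendsto (fun T => (1 - T' / T) * f T') atTop (𝓝 (f T')) := by
      have := (tendsto_const_nhds (x := (1 : ℝ))).sub
        ((tendsto_const_nhds (x := T')).div_atTop tendsto_id) |>.mul_const (f T')
      simpa using this
    filter_upwards [hlim.eventually_const_lt haT', eventually_gt_atTop T'] with T hlt hT
    have hT0 : (0 : ℝ) < T := lt_trans (Set.mem_Ioi.1 hT') hT
    calc a < (1 - T' / T) * f T' := hlt
      _ = (T - T') * f T' / T := by field_simp
      _ ≤ f T := (div_le_iff₀' hT0).2 (hf T' T hT' hT)
  · filter_upwards [eventually_gt_atTop 0] with T hT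
    exact (le_csSup hbdd ⟨T, hT, rfl⟩).trans_lt hc

lemma tendsto_nhdsGT_zero_sInf_of_sub_mul_le
    (hf : ∀ T' T, 0 < T' → T' < T → (T - T') * f T' ≤ T * f T)
    (hbdd : BddBelow (f '' Set.Ioi 0)) :
    Tendsto f (𝓝[>] 0) (𝓝 (sInf (f '' Set.Ioi 0))) := by
  refine tendsto_order.2 ⟨fun a ha => ?_, fun c hc => ?_⟩
  · filter_upwards [self_mem_nhdsWithin] with T hT
    exact ha.trans_le (csInf_le hbdd ⟨T, hT, rfl⟩)
  · obtain ⟨_, ⟨T, hT, rfl⟩, hTc⟩ := exists_lt_of_csInf_lt (Set.nonempty_Ioi.image f) hc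
    have hT0 : (0 : ℝ) < T := hT
    have hlim : Tendsto (fun T' => T * f T / (T - T')) (𝓝[>] 0) (𝓝 (f T)) := by
      have : ContinuousAt (fun T' => T * f T / (T - T')) 0 :=
        continuousAt_const.div (continuousAt_const.sub continuousAt_id) (by simp [hT0.ne'])
      simpa [hT0.ne'] using this.tendsto.mono_left nhdsWithin_le_nhds
    filter_upwards [hlim.eventually_lt_const hTc, self_mem_nhdsWithin,
      nhdsWithin_le_nhds (Iio_mem_nhds hT0)] with T' hlt hT' hT'T
    exact lt_of_le_of_lt ((le_div_iff₀' (sub_pos.2 hT'T)).2 (hf T' T hT' hT'T)) hlt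

end WindowRescaling

section CriticalRatio

variable {n : ℕ} {A : Matrix (Fin n) (Fin n) ℝ} {b : Fin n → ℝ}

lemma rhoCrit_nonneg (T : ℝ) : 0 ≤ rhoCrit A b T :=
  Real.sInf_nonneg fun _ hρ => hρ.1.1.le

lemma one_mem_rhoCrit_set (hctrl : IsControllable A b) {T : ℝ} (hT : 0 < T) :
    (1 : ℝ) ∈ {ρ : ℝ | ρ ∈ Set.Ioc (0:ℝ) 1 ∧ RCmax A b T (T * ρ) = ⊤} :=
  ⟨⟨one_pos, le_rfl⟩, by rw [mul_one]; exact RCmax_self_eq_top hctrl hT⟩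

lemma rhoCrit_le_one (hctrl : IsControllable A b) {T : ℝ} (hT : 0 < T) : rhoCrit A b T ≤ 1 :=
  csInf_le ⟨0, fun _ hρ => hρ.1.1.le⟩ (one_mem_rhoCrit_set hctrl hT)

lemma sub_mul_rhoCrit_le_mul (hctrl : IsControllable A b) {T' T ρ : ℝ} (hT' : 0 < T')
    (hT'T : T' < T) (hρ : 0 < ρ) (htop : RCmax A b T (T * ρ) = ⊤) :
    (T - T') * rhoCrit A b T' ≤ T * ρ := by
  have hT : 0 < T := hT'.trans hT'T
  set k := ⌊T / T'⌋₊
  have hkT : k * T' ≤ T := (le_div_iff₀ hT').1 (Nat.floor_le (by positivity))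
  have hkT' : T - T' < k * T' := by
    have := (div_lt_iff₀ hT').1 (Nat.lt_floor_add_one (T / T'))
    linarith
  have hk : (0 : ℝ) < k := pos_of_mul_pos_left ((sub_pos.2 hT'T).trans hkT') hT'.le
  have htop' : RCmax A b T' (T * ρ / k) = ⊤ := by
    refine eq_top_iff.2 (htop.symm.le.trans ?_)
    simpa [mul_div_cancel₀ _ hk.ne'] using
      RCmax_le_of_nat_mul_le A b hT'.le hkT (μ := T * ρ / k)
  have hcrit_nonneg := rhoCrit_nonneg (A := A) (b := b) T'
  rcases le_or_gt (T * ρ / k) T' with hle | hlt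
  · have hmem : T * ρ / k / T' ∈ {ρ : ℝ | ρ ∈ Set.Ioc (0:ℝ) 1 ∧ RCmax A b T' (T' * ρ) = ⊤} :=
      ⟨⟨by positivity, (div_le_one hT').2 hle⟩, by
        rwa [mul_div_cancel₀ _ hT'.ne']⟩
    have hcrit : rhoCrit A b T' ≤ T * ρ / k / T' := csInf_le ⟨0, fun _ h => h.1.1.le⟩ hmem
    calc (T - T') * rhoCrit A b T' ≤ (k * T') * (T * ρ / k / T') := by gcongr
      _ = T * ρ := by field_simp
  · calc (T - T') * rhoCrit A b T' ≤ (T - T') * 1 := by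
          gcongr
          exact rhoCrit_le_one hctrl hT'
      _ ≤ k * T' := by linarith
      _ ≤ T * ρ := by rw [lt_div_iff₀ hk] at hlt; linarith

lemma sub_mul_rhoCrit_le (hctrl : IsControllable A b) {T' T : ℝ} (hT' : 0 < T')
    (hT'T : T' < T) : (T - T') * rhoCrit A b T' ≤ T * rhoCrit A b T := by
  have hT : 0 < T := hT'.trans hT'T
  rw [← div_le_iff₀' hT]
  exact le_csInf ⟨1, one_mem_rhoCrit_set hctrl hT⟩ fun ρ hρ =>
    (div_le_iff₀' hT).2 (sub_mul_rhoCrit_le_mul hctrl hT' hT'T hρ.1.1 hρ.2)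

end CriticalRatio

theorem rhoCrit_limits_general (n : ℕ)
    (A : Matrix (Fin n) (Fin n) ℝ) (b : Fin n → ℝ) (hctrl : IsControllable A b) :
    Tendsto (fun T => rhoCrit A b T) atTop
      (nhds (sSup ((fun T => rhoCrit A b T) '' Set.Ioi (0:ℝ)))) ∧
    Tendsto (fun T => rhoCrit A b T) (nhdsWithin (0:ℝ) (Set.Ioi (0:ℝ)))
      (nhds (sInf ((fun T => rhoCrit A b T) '' Set.Ioi (0:ℝ)))) := by
  have hkey := fun T' T (hT' : (0:ℝ) < T') (hT'T : T' < T) => sub_mul_rhoCrit_le hctrl hT' hT'T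
  refine ⟨tendsto_atTop_sSup_of_sub_mul_le hkey ⟨1, ?_⟩,
    tendsto_nhdsGT_zero_sInf_of_sub_mul_le hkey ⟨0, ?_⟩⟩
  · rintro _ ⟨T, hT, rfl⟩
    exact rhoCrit_le_one hctrl hT
  · rintro _ ⟨T, -, rfl⟩
    exact rhoCrit_nonneg T

/-- Lemma 3(ii): for a controllable pair `(A,b)`, `lim_{T→+∞} ρ(A,T)` exists and equals
`sup_{T>0} ρ(A,T)`, and `lim_{T→0⁺} ρ(A,T)` exists and equals `inf_{T>0} ρ(A,T)`. -/
theorem rhoCrit_limits (n : ℕ) (hn : 0 < n)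
    (A : Matrix (Fin n) (Fin n) ℝ) (b : Fin n → ℝ) (hctrl : IsControllable A b) :
    Tendsto (fun T => rhoCrit A b T) atTop
      (nhds (sSup ((fun T => rhoCrit A b T) '' Set.Ioi (0:ℝ)))) ∧
    Tendsto (fun T => rhoCrit A b T) (nhdsWithin (0:ℝ) (Set.Ioi (0:ℝ)))
      (nhds (sInf ((fun T => rhoCrit A b T) '' Set.Ioi (0:ℝ)))) :=
  rhoCrit_limits_general n A b hctrl

end
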